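/- The partial transpose ρ₆₆^{T_B} of ρ₆₆ has rank 6. -/

import Mathlib

open Matrix ComplexOrder

noncomputable def N66 : Matrix (Fin 9) (Fin 9) ℂ :=
  !![1, 0, 0, 0, 0, 0, 0, 0, -1;
     0, 2, 0, -1, 0, 0, 0, 0, 0;
     0, 0, 1, 0, 0, 0, 1, 0, 0;
     0, -1, 0, 1, 0, 0, 0, 0, 1;
     0, 0, 0, 0, 1, 0, 1, 0, 0;
     0, 0, 0, 0, 0, 1, 0, -1, 0;
     0, 0, 1, 0, 1, 0, 2, 0, 0;
     0, 0, 0, 0, 0, -1, 0, 1, 0;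
     -1, 0, 0, 1, 0, 0, 0, 0, 3]

/-- The index map `(i, j) ↦ 3 i + j` from `Fin 3 × Fin 3` to `Fin 9`. -/
def idx (p : Fin 3 × Fin 3) : Fin 9 :=
  ⟨3 * p.1.val + p.2.val, by have h1 := p.1.isLt; have h2 := p.2.isLt; omega⟩

/-- The state `ρ₆₆`, viewed as an operator on `ℂ³ ⊗ ℂ³`. -/
noncomputable def rho66 : Matrix (Fin 3 × Fin 3) (Fin 3 × Fin 3) ℂ :=
  fun p q => (1 / 13 : ℂ) * N66 (idx p) (idx q)

/-- The partial transpose on the second factor: `(ρ^{T_B})_{(i,j),(k,l)} = ρ_{(i,l),(k,j)}`. -/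
noncomputable def ptrans (ρ : Matrix (Fin 3 × Fin 3) (Fin 3 × Fin 3) ℂ) :
    Matrix (Fin 3 × Fin 3) (Fin 3 × Fin 3) ℂ :=
  fun p q => ρ (p.1, q.2) (q.1, p.2)

/-! In the product basis, `13 ρ₆₆^{T_B}` is the direct sum of the blocks
`[[1,-1,1],[-1,1,-1],[1,-1,3]]` on `{00, 11, 22}`, `[2]` on `{01}`,
`[[1,0,-1],[0,1,1],[-1,1,2]]` on `{02, 12, 20}` and `[[1,1],[1,1]]` on `{10, 21}`,
of ranks 2, 1, 2, 1. So the rows `00, 01, 02, 10, 12, 22` span the row space and their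
principal minor is invertible. Both facts are identities between rational matrices, decided by
the kernel on an exact copy of `ρ₆₆` over `ℚ` and carried to `ℂ` along `ℚ →+* ℂ`. -/

def Matrix.partialTranspose {m n α : Type*} (ρ : Matrix (m × n) (m × n) α) :
    Matrix (m × n) (m × n) α :=
  fun p q => ρ (p.1, q.2) (q.1, p.2)

theorem Matrix.partialTranspose_map {m n α β : Type*} (ρ : Matrix (m × n) (m × n) α)
    (f : α → β) : (ρ.map f).partialTranspose = ρ.partialTranspose.map f :=
  rfl

theorem ptrans_eq_partialTranspose (ρ : Matrix (Fin 3 × Fin 3) (Fin 3 × Fin 3) ℂ) :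
    ptrans ρ = ρ.partialTranspose :=
  rfl

theorem Matrix.rank_eq_card_of_rows_span_of_mul_eq_one {m n r R : Type*} [Fintype n]
    [Fintype r] [DecidableEq r] [CommRing R] [StrongRankCondition R] {M : Matrix m n R}
    (s : r → m) (t : r → n) (A : Matrix m r R) (C : Matrix r r R)
    (hA : A * M.submatrix s id = M) (hC : M.submatrix s t * C = 1) :
    M.rank = Fintype.card r := by
  apply le_antisymm
  · calc M.rank = (A * M.submatrix s id).rank := by rw [hA]
      _ ≤ A.rank := rank_mul_le_left _ _
      _ ≤ Fintype.card r := rank_le_card_width _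
  · calc Fintype.card r = (M.submatrix s t * C).rank := by rw [hC, rank_one]
      _ ≤ (M.submatrix s t).rank := rank_mul_le_left _ _
      _ ≤ M.rank := rank_submatrix_le _ _ _

theorem Matrix.rank_map_eq_card_of_rows_span_of_mul_eq_one {m n r R K : Type*}
    [Fintype n] [Fintype r] [DecidableEq r] [CommRing R] [CommRing K] [StrongRankCondition K]
    (f : R →+* K) {M : Matrix m n R} (s : r → m) (t : r → n) (A : Matrix m r R)
    (C : Matrix r r R) (hA : A * M.submatrix s id = M) (hC : M.submatrix s t * C = 1) :
    (M.map f).rank = Fintype.card r :=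
  rank_eq_card_of_rows_span_of_mul_eq_one s t (A.map f) (C.map f)
    (by rw [submatrix_map, ← Matrix.map_mul, hA])
    (by rw [submatrix_map, ← Matrix.map_mul, hC, Matrix.map_one _ f.map_zero f.map_one])

def N66q : Matrix (Fin 9) (Fin 9) ℚ :=
  !![1, 0, 0, 0, 0, 0, 0, 0, -1;
     0, 2, 0, -1, 0, 0, 0, 0, 0;
     0, 0, 1, 0, 0, 0, 1, 0, 0;
     0, -1, 0, 1, 0, 0, 0, 0, 1;
     0, 0, 0, 0, 1, 0, 1, 0, 0;
     0, 0, 0, 0, 0, 1, 0, -1, 0;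
     0, 0, 1, 0, 1, 0, 2, 0, 0;
     0, 0, 0, 0, 0, -1, 0, 1, 0;
     -1, 0, 0, 1, 0, 0, 0, 0, 3]

def rho66q : Matrix (Fin 3 × Fin 3) (Fin 3 × Fin 3) ℚ :=
  (1 / 13 : ℚ) • N66q.submatrix idx idx

theorem N66q_map : N66q.map (↑) = N66 := by
  ext i j
  fin_cases i <;> fin_cases j <;> simp [N66q, N66]

theorem rho66q_map : rho66q.map (↑) = rho66 := by
  ext p q
  simp [rho66q, rho66, ← N66q_map]

def rowBasis : Fin 6 → Fin 3 × Fin 3 :=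
  ![(0, 0), (0, 1), (0, 2), (1, 0), (1, 2), (2, 2)]

def rowCoeffs : Matrix (Fin 3 × Fin 3) (Fin 6) ℚ :=
  (!![1, 0, 0, 0, 0, 0;
      0, 1, 0, 0, 0, 0;
      0, 0, 1, 0, 0, 0;
      0, 0, 0, 1, 0, 0;
      -1, 0, 0, 0, 0, 0;
      0, 0, 0, 0, 1, 0;
      0, 0, -1, 0, 1, 0;
      0, 0, 0, 1, 0, 0;
      0, 0, 0, 0, 0, 1] : Matrix (Fin 9) (Fin 6) ℚ).submatrix idx id

def rowBasisMinorInv : Matrix (Fin 6) (Fin 6) ℚ :=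
  !![39/2, 0, 0, 0, 0, -13/2;
     0, 13/2, 0, 0, 0, 0;
     0, 0, 13, 0, 0, 0;
     0, 0, 0, 13, 0, 0;
     0, 0, 0, 0, 13, 0;
     -13/2, 0, 0, 0, 0, 13/2]

theorem rowCoeffs_mul_rowBasis :
    rowCoeffs * rho66q.partialTranspose.submatrix rowBasis id = rho66q.partialTranspose := by
  decide +kernel

theorem rowBasis_minor_mul_inv :
    rho66q.partialTranspose.submatrix rowBasis rowBasis * rowBasisMinorInv = 1 := by
  decide +kernel

/-- The partial transpose of `ρ₆₆` has rank 6. -/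
theorem rho66_ptrans_rank : (ptrans rho66).rank = 6 := by
  rw [ptrans_eq_partialTranspose, ← rho66q_map, partialTranspose_map]
  exact rank_map_eq_card_of_rows_span_of_mul_eq_one (Rat.castHom ℂ) rowBasis rowBasis rowCoeffs
    rowBasisMinorInv rowCoeffs_mul_rowBasis rowBasis_minor_mul_inv
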